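/- Assume the semigroup e^{-tL} has kernel p_t(x,y) with Gaussian upper bound |p_t(x,y)| ≤ C t^{-n/2} e^{-c|x-y|²/t}. Then for 0 < α < n, the difference operator L^{-α/2} − e^{-tL} L^{-α/2} has an associated kernel K_{α,t}(x,y) satisfying |K_{α,t}(x,y)| ≤ C' |x−y|^{α−n} · t/|x−y|² for all x ≠ y and t > 0. -/

import Mathlib

open MeasureTheory Real Set

noncomputable section

variable {n : ℕ}

/-- The closed cube with center `c` and "radius" (half side length) `r`. -/
def cube (c : Fin n → ℝ) (r : ℝ) : Set (Fin n → ℝ) := {y | ∀ i, |y i - c i| ≤ r}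

/-- Average of `f` over `Q`. -/
def mean (f : (Fin n → ℝ) → ℝ) (Q : Set (Fin n → ℝ)) : ℝ :=
  (volume Q).toReal⁻¹ * ∫ x in Q, f x

/-- Weighted measure of a set: `ω(Q) = ∫_Q ω`. -/
def wInt (ω : (Fin n → ℝ) → ℝ) (Q : Set (Fin n → ℝ)) : ℝ := ∫ x in Q, ω x

/-- Muckenhoupt `A₁`. -/
def IsA1 (ω : (Fin n → ℝ) → ℝ) : Prop :=
  ∃ C > 0, ∀ (c : Fin n → ℝ) (r : ℝ), 0 < r →
    mean ω (cube c r) ≤ C * essInf ω (volume.restrict (cube c r))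

/-- Muckenhoupt `A_p`, `1 < p < ∞`. -/
def IsAp (p : ℝ) (ω : (Fin n → ℝ) → ℝ) : Prop :=
  ∃ C > 0, ∀ (c : Fin n → ℝ) (r : ℝ), 0 < r →
    mean ω (cube c r) * (mean (fun x => ω x ^ (-(1 / (p - 1)))) (cube c r)) ^ (p - 1) ≤ C

/-- `A_∞` : `ω ∈ A_p` for some finite `p > 1`. -/
def IsAinf (ω : (Fin n → ℝ) → ℝ) : Prop := ∃ p > 1, IsAp p ω

/-- The class `A_{p,q}`. -/
def IsApq (p q : ℝ) (ω : (Fin n → ℝ) → ℝ) : Prop :=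
  ∃ C > 0, ∀ (c : Fin n → ℝ) (r : ℝ), 0 < r →
    (mean (fun x => ω x ^ q) (cube c r)) ^ (1 / q) *
      (mean (fun x => ω x ^ (-(p / (p - 1)))) (cube c r)) ^ ((p - 1) / p) ≤ C

/-- Reverse Hölder class `RH_r`. -/
def IsRH (ω : (Fin n → ℝ) → ℝ) (r : ℝ) : Prop :=
  ∃ C > 0, ∀ (c : Fin n → ℝ) (ρ : ℝ), 0 < ρ →
    (mean (fun x => ω x ^ r) (cube c ρ)) ^ (1 / r) ≤ C * mean ω (cube c ρ)

/-- Critical reverse Hölder index `r_ω`. -/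
def rwIndex (ω : (Fin n → ℝ) → ℝ) : ℝ := sSup {r : ℝ | 1 < r ∧ IsRH ω r}

/-- Membership in weighted BMO(ω). -/
def MemBMOW (ω b : (Fin n → ℝ) → ℝ) : Prop :=
  ∃ M : ℝ, ∀ (c : Fin n → ℝ) (r : ℝ), 0 < r →
    (∫ x in cube c r, |b x - mean b (cube c r)|) ≤ M * wInt ω (cube c r)

/-- Weighted BMO norm. -/
def bmoW (ω b : (Fin n → ℝ) → ℝ) : ℝ :=
  ⨆ c : Fin n → ℝ, ⨆ r : {r : ℝ // 0 < r},
    (wInt ω (cube c ↑r))⁻¹ * ∫ x in cube c ↑r, |b x - mean b (cube c ↑r)|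

/-- Membership in BMO. -/
def MemBMO (b : (Fin n → ℝ) → ℝ) : Prop :=
  ∃ M : ℝ, ∀ (c : Fin n → ℝ) (r : ℝ), 0 < r →
    mean (fun x => |b x - mean b (cube c r)|) (cube c r) ≤ M

/-- BMO norm. -/
def bmoN (b : (Fin n → ℝ) → ℝ) : ℝ :=
  ⨆ c : Fin n → ℝ, ⨆ r : {r : ℝ // 0 < r},
    mean (fun x => |b x - mean b (cube c ↑r)|) (cube c ↑r)

/-- Two-weight weighted Morrey norm `‖f‖_{L^{p,k}(μ,ν)}`. -/
def morrey (p k : ℝ) (μ ν f : (Fin n → ℝ) → ℝ) : ℝ :=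
  ⨆ c : Fin n → ℝ, ⨆ r : {r : ℝ // 0 < r},
    ((wInt ν (cube c ↑r)) ^ (-k) * ∫ x in cube c ↑r, |f x| ^ p * μ x) ^ (1 / p)

/-- Supremum over all cubes containing `x`. -/
def supCubes (x : Fin n → ℝ) (F : (Fin n → ℝ) → ℝ → ℝ) : ℝ :=
  ⨆ cr : {cr : (Fin n → ℝ) × ℝ // 0 < cr.2 ∧ x ∈ cube cr.1 cr.2}, F cr.1.1 cr.1.2

/-- Hardy–Littlewood maximal function (over cubes). -/
def maxHL (f : (Fin n → ℝ) → ℝ) (x : Fin n → ℝ) : ℝ :=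
  supCubes x (fun c r => mean (fun y => |f y|) (cube c r))

/-- `M_r f = (M(|f|^r))^{1/r}`. -/
def maxR (r : ℝ) (f : (Fin n → ℝ) → ℝ) (x : Fin n → ℝ) : ℝ :=
  (maxHL (fun y => |f y| ^ r) x) ^ (1 / r)

/-- Fractional maximal operator `M_{α,t}`. -/
def maxFr (α t : ℝ) (f : (Fin n → ℝ) → ℝ) (x : Fin n → ℝ) : ℝ :=
  supCubes x (fun c r =>
    ((volume (cube c r)).toReal ^ (-(1 - α * t / (n : ℝ))) * ∫ y in cube c r, |f y| ^ t) ^ (1 / t))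

/-- Weighted maximal operator `M_{r,ω}`. -/
def maxWr (r : ℝ) (ω f : (Fin n → ℝ) → ℝ) (x : Fin n → ℝ) : ℝ :=
  supCubes x (fun c ρ =>
    ((wInt ω (cube c ρ))⁻¹ * ∫ y in cube c ρ, |f y| ^ r * ω y) ^ (1 / r))

/-- Weighted fractional maximal operator `M_{α,r,ω}`. -/
def maxFrW (α r : ℝ) (ω f : (Fin n → ℝ) → ℝ) (x : Fin n → ℝ) : ℝ :=
  supCubes x (fun c ρ =>
    ((wInt ω (cube c ρ)) ^ (-(1 - α * r / (n : ℝ))) * ∫ y in cube c ρ, |f y| ^ r * ω y) ^ (1 / r))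

/-- Gaussian upper bound for a semigroup kernel family. -/
def GaussianBound (pk : ℝ → (Fin n → ℝ) → (Fin n → ℝ) → ℝ) : Prop :=
  ∃ C > 0, ∃ cc > 0, ∀ t : ℝ, 0 < t → ∀ x y : Fin n → ℝ,
    |pk t x y| ≤ C * t ^ (-(n : ℝ) / 2) * Real.exp (-cc * ‖x - y‖ ^ 2 / t)

/-- Semigroup operator `e^{-tL}` given by its kernel. -/
def semiOp (pk : ℝ → (Fin n → ℝ) → (Fin n → ℝ) → ℝ) (t : ℝ) (f : (Fin n → ℝ) → ℝ)
    (x : Fin n → ℝ) : ℝ := ∫ y, pk t x y * f y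

/-- Generalized fractional integral `L^{-α/2}`. -/
def fracL (pk : ℝ → (Fin n → ℝ) → (Fin n → ℝ) → ℝ) (α : ℝ) (f : (Fin n → ℝ) → ℝ)
    (x : Fin n → ℝ) : ℝ :=
  (Real.Gamma (α / 2))⁻¹ * ∫ t in Ioi (0 : ℝ), semiOp pk t f x * t ^ (α / 2 - 1)

/-- Commutator `[b, T] f = b · Tf − T(bf)`. -/
def commL (b : (Fin n → ℝ) → ℝ) (T : ((Fin n → ℝ) → ℝ) → (Fin n → ℝ) → ℝ)
    (f : (Fin n → ℝ) → ℝ) (x : Fin n → ℝ) : ℝ :=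
  b x * T f x - T (fun y => b y * f y) x

/-- Sharp maximal function `M^♯_L` associated to the semigroup, with `t_Q = r_Q²`. -/
def sharpL (pk : ℝ → (Fin n → ℝ) → (Fin n → ℝ) → ℝ) (g : (Fin n → ℝ) → ℝ)
    (x : Fin n → ℝ) : ℝ :=
  supCubes x (fun c r => mean (fun y => |g y - semiOp pk (r ^ 2) g y|) (cube c r))

/-- Riesz potential `I_α`. -/
def riesz (α : ℝ) (f : (Fin n → ℝ) → ℝ) (x : Fin n → ℝ) : ℝ :=
  ∫ y, f y * ‖x - y‖ ^ (α - (n : ℝ))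

/-
Fix `x ≠ y` and write `P s = p_s(x, y)`, `δ = α/2 - 1`, `ν = n/2`, `A = c‖x - y‖²`.
After the substitution `s ↦ s - t` in the second term,
`∫₀^∞ s^δ (P s - P (s + t)) ds`
`  = ∫₀^{2t} s^δ P - ∫_t^{2t} (s - t)^δ P + ∫_{2t}^∞ (s^δ - (s - t)^δ) P`.
The Gaussian bound and `e^{-x} ≲ x^{-(ν - δ)}` give `|P s| ≲ A^{δ-ν} s^{-δ}`, which bounds the
first two pieces by `t A^{δ-ν}`. On `s ≥ 2t` the mean value theorem gives
`|s^δ - (s - t)^δ| ≲ t s^{δ-1}`, and `∫₀^∞ s^{δ-ν-1} e^{-A/s} ds = Γ(ν - δ) A^{δ-ν}` by `s ↦ 1/s`.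
Since `A^{δ-ν} ∝ ‖x - y‖^{α-n-2}`, this is the claim. No regularity of the kernel in `s` is used:
if the integrand is not integrable its integral is `0`, and otherwise `s ↦ P s` is measurable
because `P s = ∑ₖ (P (s + k t) - P (s + (k + 1) t))`.
-/

open Filter Topology

/- The integrand of `integral_comp_rpow_Ioi` for the substitution `s ↦ s⁻¹`. -/
lemma rpow_mul_exp_neg_div_eq_comp_inv {β A x : ℝ} (hx : 0 < x) :
    (|(-1 : ℝ)| * x ^ ((-1 : ℝ) - 1)) • ((x ^ (-1 : ℝ)) ^ (-β - 1) * exp (-(A * x ^ (-1 : ℝ))))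
      = x ^ (β - 1) * exp (-(A / x)) := by
  rw [smul_eq_mul, ← rpow_mul hx.le, rpow_neg_one, ← div_eq_mul_inv, abs_neg, abs_one, one_mul,
    ← mul_assoc, ← rpow_add hx]
  ring_nf

lemma integral_rpow_mul_exp_neg_div {β A : ℝ} (hβ : β < 0) (hA : 0 < A) :
    ∫ s in Ioi (0 : ℝ), s ^ (β - 1) * exp (-(A / s)) = Gamma (-β) * A ^ β := by
  rw [← setIntegral_congr_fun measurableSet_Ioi (fun x hx => rpow_mul_exp_neg_div_eq_comp_inv hx),
    integral_comp_rpow_Ioi (fun u : ℝ => u ^ (-β - 1) * exp (-(A * u))) (by norm_num),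
    integral_rpow_mul_exp_neg_mul_Ioi (by linarith) hA,
    one_div, inv_rpow hA.le, ← rpow_neg hA.le, neg_neg, mul_comm]

lemma integrableOn_rpow_mul_exp_neg_div {β A : ℝ} (hβ : β < 0) (hA : 0 < A) :
    IntegrableOn (fun s : ℝ => s ^ (β - 1) * exp (-(A / s))) (Ioi 0) :=
  .of_integral_ne_zero <| by
    rw [integral_rpow_mul_exp_neg_div hβ hA]
    exact (mul_pos (Gamma_pos_of_pos (by linarith)) (by positivity)).ne'

lemma exists_exp_neg_le_mul_rpow_neg {k : ℝ} (hk : 0 ≤ k) :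
    ∃ M > 0, ∀ x : ℝ, 0 < x → exp (-x) ≤ M * x ^ (-k) := by
  set m := ⌈k⌉₊
  refine ⟨m.factorial + 1, by positivity, fun x hx => ?_⟩
  have hxk : x ^ k ≤ 1 + x ^ m := by
    rcases le_total x 1 with hx1 | hx1
    · linarith [rpow_le_one hx.le hx1 hk, pow_nonneg hx.le m]
    · calc x ^ k ≤ x ^ (m : ℝ) := rpow_le_rpow_of_exponent_le hx1 (Nat.le_ceil k)
        _ ≤ 1 + x ^ m := by rw [rpow_natCast]; linarith
  have hxm : x ^ m ≤ m.factorial * exp x := by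
    have := pow_div_factorial_le_exp (x := x) hx.le m
    rwa [div_le_iff₀ (by positivity), mul_comm] at this
  rw [rpow_neg hx.le, ← div_eq_mul_inv, le_div_iff₀ (by positivity), exp_neg,
    ← div_eq_inv_mul, div_le_iff₀ (exp_pos x)]
  nlinarith [add_one_le_exp x, exp_pos x]

lemma rpow_le_two_rpow_abs_mul_rpow {p x y : ℝ} (hx : 0 < x) (hxy : x ≤ 2 * y) (hyx : y ≤ 2 * x) :
    x ^ p ≤ 2 ^ |p| * y ^ p := by
  rcases le_total 0 p with hp | hp
  · calc x ^ p ≤ (2 * y) ^ p := rpow_le_rpow hx.le hxy hp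
      _ = 2 ^ |p| * y ^ p := by rw [mul_rpow zero_le_two (by linarith), abs_of_nonneg hp]
  · calc x ^ p ≤ (y / 2) ^ p := rpow_le_rpow_of_nonpos (by linarith) (by linarith) hp
      _ = 2 ^ |p| * y ^ p := by
        rw [div_rpow (by linarith) zero_le_two, abs_of_nonpos hp, rpow_neg zero_le_two,
          div_eq_mul_inv, mul_comm]

lemma abs_rpow_sub_rpow_sub_le {δ t s : ℝ} (ht : 0 < t) (hs : 2 * t ≤ s) :
    |s ^ δ - (s - t) ^ δ| ≤ |δ| * 2 ^ |δ - 1| * t * s ^ (δ - 1) := by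
  have hpos : ∀ u ∈ Icc (s - t) s, u ≠ 0 := fun u hu => (by linarith [hu.1] : (0 : ℝ) < u).ne'
  obtain ⟨ξ, ⟨hξ₁, hξ₂⟩, hslope⟩ := exists_hasDerivAt_eq_slope (fun u => u ^ δ)
    (fun u => δ * u ^ (δ - 1)) (by linarith : s - t < s)
    (continuousOn_id.rpow_const fun u hu => Or.inl (hpos u hu))
    (fun u hu => hasDerivAt_rpow_const (Or.inl (hpos u (Ioo_subset_Icc_self hu))))
  have hdiff : s ^ δ - (s - t) ^ δ = δ * ξ ^ (δ - 1) * t := by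
    rw [hslope, sub_sub_cancel, div_mul_cancel₀ _ ht.ne']
  have hξ : 0 < ξ := by linarith
  rw [hdiff, abs_mul, abs_mul, abs_of_pos ht, abs_of_pos (rpow_pos_of_pos hξ _)]
  have := rpow_le_two_rpow_abs_mul_rpow (p := δ - 1) (y := s) hξ (by linarith) (by linarith)
  calc |δ| * ξ ^ (δ - 1) * t ≤ |δ| * (2 ^ |δ - 1| * s ^ (δ - 1)) * t := by gcongr
    _ = |δ| * 2 ^ |δ - 1| * t * s ^ (δ - 1) := by ring

lemma measurePreserving_add_right_restrict_Ioi (a c : ℝ) :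
    MeasurePreserving (· + c) (volume.restrict (Ioi a)) (volume.restrict (Ioi (a + c))) := by
  simpa only [preimage_add_const_Ioi, add_sub_cancel_right] using
    (measurePreserving_add_right volume c).restrict_preimage (measurableSet_Ioi (a := a + c))

lemma aestronglyMeasurable_of_sub_comp_add {P : ℝ → ℝ} {a t : ℝ} (ht : 0 < t)
    (hP : Tendsto P atTop (𝓝 0))
    (hq : AEStronglyMeasurable (fun s => P s - P (s + t)) (volume.restrict (Ioi a))) :
    AEStronglyMeasurable P (volume.restrict (Ioi a)) := by
  have hshift : ∀ c : ℝ, 0 ≤ c →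
      AEStronglyMeasurable (fun s => P (s + c) - P (s + c + t)) (volume.restrict (Ioi a)) :=
    fun c hc => (hq.mono_measure (Measure.restrict_mono (Ioi_subset_Ioi (by linarith)) le_rfl))
      |>.comp_measurePreserving (measurePreserving_add_right_restrict_Ioi a c)
  have htelescope : ∀ (k : ℕ) (s : ℝ),
      ∑ j ∈ Finset.range k, (P (s + j * t) - P (s + j * t + t)) = P s - P (s + k * t) := by
    intro k s
    simpa only [Nat.cast_add, Nat.cast_one, Nat.cast_zero, zero_mul, add_zero, add_mul, one_mul,
      ← add_assoc] using Finset.sum_range_sub' (fun j : ℕ => P (s + j * t)) k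
  have hpartial : ∀ k : ℕ, AEStronglyMeasurable
      (fun s => ∑ j ∈ Finset.range k, (P (s + j * t) - P (s + j * t + t)))
      (volume.restrict (Ioi a)) := fun k =>
    Finset.aestronglyMeasurable_fun_sum _ fun j _ => hshift _ (by positivity)
  refine aestronglyMeasurable_of_tendsto_ae atTop hpartial (ae_of_all _ fun s => ?_)
  simp only [htelescope]
  have hlim : Tendsto (fun k : ℕ => s + k * t) atTop atTop :=
    tendsto_atTop_add_const_left _ s (tendsto_natCast_atTop_atTop.atTop_mul_const ht)
  simpa using tendsto_const_nhds.sub (hP.comp hlim)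

lemma aestronglyMeasurable_of_rpow_mul {f : ℝ → ℝ} {δ : ℝ}
    (h : AEStronglyMeasurable (fun s => s ^ δ * f s) (volume.restrict (Ioi 0))) :
    AEStronglyMeasurable f (volume.restrict (Ioi 0)) := by
  have hpow : ContinuousOn (fun s : ℝ => s ^ (-δ)) (Ioi 0) :=
    continuousOn_id.rpow_const fun s (hs : 0 < s) => Or.inl hs.ne'
  refine ((hpow.aestronglyMeasurable measurableSet_Ioi).mul h).congr
    (ae_restrict_of_forall_mem measurableSet_Ioi fun s (hs : 0 < s) => ?_)
  simp only [Pi.mul_apply]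
  rw [← mul_assoc, ← rpow_add hs, neg_add_cancel, rpow_zero, one_mul]

lemma setIntegral_mul_sub_comp_add_eq {w P : ℝ → ℝ} {t : ℝ} (ht : 0 ≤ t)
    (hwP : IntegrableOn (fun s => w s * P s) (Ioi 0))
    (hf : IntegrableOn (fun s => w s * (P s - P (s + t))) (Ioi 0)) :
    ∫ s in Ioi 0, w s * (P s - P (s + t)) =
      (∫ s in Ioc 0 (2 * t), w s * P s) - (∫ s in Ioc t (2 * t), w (s - t) * P s) +
        ∫ s in Ioi (2 * t), (w s - w (s - t)) * P s := by
  have hmp := measurePreserving_add_right_restrict_Ioi 0 t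
  have hemb := measurableEmbedding_addRight t
  rw [zero_add] at hmp
  have hwPt : IntegrableOn (fun s => w s * P (s + t)) (Ioi 0) :=
    (hwP.sub hf).congr_fun (fun s _ => by simp only [Pi.sub_apply]; ring) measurableSet_Ioi
  have hshifted : IntegrableOn (fun s => w (s - t) * P s) (Ioi t) :=
    (hmp.integrable_comp_emb hemb).1 (by simpa only [Function.comp_def, add_sub_cancel_right])
  have hshift : ∫ s in Ioi 0, w s * P (s + t) = ∫ s in Ioi t, w (s - t) * P s := by
    simpa only [add_sub_cancel_right] using
      hmp.integral_comp hemb (fun s => w (s - t) * P s)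
  have h2t : t ≤ 2 * t := by linarith
  rw [← Ioc_union_Ioi_eq_Ioi h2t, setIntegral_union (Ioc_disjoint_Ioi le_rfl) measurableSet_Ioi
    (hshifted.mono_set Ioc_subset_Ioi_self) (hshifted.mono_set (Ioi_subset_Ioi h2t))] at hshift
  have hsplit := setIntegral_union (Ioc_disjoint_Ioi le_rfl) measurableSet_Ioi
    (hwP.mono_set Ioc_subset_Ioi_self) (hwP.mono_set (Ioi_subset_Ioi (by linarith : 0 ≤ 2 * t)))
  rw [Ioc_union_Ioi_eq_Ioi (by linarith)] at hsplit
  have htail : ∫ s in Ioi (2 * t), (w s - w (s - t)) * P s =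
      (∫ s in Ioi (2 * t), w s * P s) - ∫ s in Ioi (2 * t), w (s - t) * P s := by
    rw [← integral_sub (hwP.mono_set (Ioi_subset_Ioi (by linarith)))
      (hshifted.mono_set (Ioi_subset_Ioi h2t))]
    simp only [sub_mul]
  have hsub : ∫ s in Ioi 0, w s * (P s - P (s + t)) =
      (∫ s in Ioi 0, w s * P s) - ∫ s in Ioi 0, w s * P (s + t) := by
    rw [← integral_sub hwP hwPt]
    simp only [mul_sub]
  rw [hsub, hshift, hsplit, htail]
  ring

lemma setIntegral_Ioc_rpow_sub {δ t : ℝ} (hδ : -1 < δ) (ht : 0 ≤ t) :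
    IntegrableOn (fun s => (s - t) ^ δ) (Ioc t (2 * t)) ∧
      ∫ s in Ioc t (2 * t), (s - t) ^ δ = t ^ (δ + 1) / (δ + 1) := by
  have h2t : t ≤ 2 * t := by linarith
  have hint := (intervalIntegral.intervalIntegrable_rpow' (a := 0) (b := t) hδ).comp_sub_right t
  rw [zero_add, show t + t = 2 * t by ring] at hint
  refine ⟨(intervalIntegrable_iff_integrableOn_Ioc_of_le h2t).1 hint, ?_⟩
  rw [← intervalIntegral.integral_of_le h2t,
    intervalIntegral.integral_comp_sub_right (fun u => u ^ δ), show 2 * t - t = t by ring,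
    sub_self, integral_rpow (Or.inl hδ), zero_rpow (by linarith), sub_zero]

lemma abs_setIntegral_Ioc_zero_rpow_mul_le {P : ℝ → ℝ} {B δ u : ℝ} (hu : 0 ≤ u)
    (hB : ∀ s, 0 < s → |P s| ≤ B * s ^ (-δ)) :
    |∫ s in Ioc 0 u, s ^ δ * P s| ≤ B * u := by
  have hbound : ∀ s ∈ Ioc (0 : ℝ) u, ‖s ^ δ * P s‖ ≤ B := fun s hs => by
    rw [norm_mul, norm_of_nonneg (rpow_nonneg hs.1.le _)]
    calc s ^ δ * |P s| ≤ s ^ δ * (B * s ^ (-δ)) :=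
          mul_le_mul_of_nonneg_left (hB s hs.1) (rpow_nonneg hs.1.le _)
      _ = B := by rw [mul_left_comm, ← rpow_add hs.1, add_neg_cancel, rpow_zero, mul_one]
  simpa [volume_real_Ioc_of_le hu] using
    norm_setIntegral_le_of_norm_le_const (μ := volume) measure_Ioc_lt_top hbound

lemma abs_setIntegral_Ioc_rpow_sub_mul_le {P : ℝ → ℝ} {B δ t : ℝ} (hδ : -1 < δ) (ht : 0 < t)
    (hB : ∀ s, 0 < s → |P s| ≤ B * s ^ (-δ)) :
    |∫ s in Ioc t (2 * t), (s - t) ^ δ * P s| ≤ B * 2 ^ |δ| / (δ + 1) * t := by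
  have hB0 : 0 ≤ B := nonneg_of_mul_nonneg_left ((abs_nonneg _).trans (hB t ht)) (by positivity)
  obtain ⟨hint, hval⟩ := setIntegral_Ioc_rpow_sub hδ ht.le
  have hbound : ∀ s ∈ Ioc t (2 * t), ‖(s - t) ^ δ * P s‖ ≤ B * 2 ^ |δ| * t ^ (-δ) * (s - t) ^ δ :=
    fun s hs => by
      have hs0 : 0 < s := ht.trans hs.1
      have hpow := rpow_le_two_rpow_abs_mul_rpow (p := -δ) hs0 hs.2 (by linarith [hs.1])
      rw [abs_neg] at hpow
      rw [norm_mul, norm_of_nonneg (rpow_nonneg (by linarith [hs.1]) _), mul_comm]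
      have hst : 0 ≤ (s - t) ^ δ := rpow_nonneg (by linarith [hs.1]) _
      calc |P s| * (s - t) ^ δ ≤ B * s ^ (-δ) * (s - t) ^ δ :=
            mul_le_mul_of_nonneg_right (hB s hs0) hst
        _ ≤ B * (2 ^ |δ| * t ^ (-δ)) * (s - t) ^ δ := by gcongr
        _ = B * 2 ^ |δ| * t ^ (-δ) * (s - t) ^ δ := by ring
  calc |∫ s in Ioc t (2 * t), (s - t) ^ δ * P s|
      ≤ ∫ s in Ioc t (2 * t), B * 2 ^ |δ| * t ^ (-δ) * (s - t) ^ δ :=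
        norm_integral_le_of_norm_le (hint.const_mul _)
          (ae_restrict_of_forall_mem measurableSet_Ioc hbound)
    _ = B * 2 ^ |δ| / (δ + 1) * (t ^ (-δ) * t ^ (δ + 1)) := by
        rw [integral_const_mul, hval]; ring
    _ = B * 2 ^ |δ| / (δ + 1) * t := by rw [← rpow_add ht, neg_add_cancel_left, rpow_one]

section GaussianProfile

variable {P : ℝ → ℝ} {C ν A δ : ℝ}

lemma nonneg_of_gaussian (hP : ∀ s, 0 < s → |P s| ≤ C * s ^ (-ν) * exp (-(A / s))) : 0 ≤ C := by
  have h := (abs_nonneg _).trans (hP 1 one_pos)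
  rw [one_rpow, mul_one] at h
  exact nonneg_of_mul_nonneg_left h (exp_pos _)

lemma tendsto_zero_of_gaussian (hν : 0 < ν) (hA : 0 ≤ A)
    (hP : ∀ s, 0 < s → |P s| ≤ C * s ^ (-ν) * exp (-(A / s))) :
    Tendsto P atTop (𝓝 0) := by
  have hC := nonneg_of_gaussian hP
  refine squeeze_zero_norm' ?_ (by simpa using (tendsto_rpow_neg_atTop hν).const_mul C)
  filter_upwards [eventually_gt_atTop 0] with s hs
  calc ‖P s‖ ≤ C * s ^ (-ν) * exp (-(A / s)) := hP s hs
    _ ≤ C * s ^ (-ν) * 1 := by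
        gcongr
        exact exp_le_one_iff.2 (neg_nonpos.2 (by positivity))
    _ = C * s ^ (-ν) := mul_one _

lemma abs_le_rpow_neg_of_gaussian {M : ℝ} (hA : 0 < A) (hC : 0 ≤ C)
    (hM : ∀ x : ℝ, 0 < x → exp (-x) ≤ M * x ^ (-(ν - δ)))
    (hP : ∀ s, 0 < s → |P s| ≤ C * s ^ (-ν) * exp (-(A / s))) :
    ∀ s, 0 < s → |P s| ≤ C * M * A ^ (δ - ν) * s ^ (-δ) := by
  intro s hs
  calc |P s| ≤ C * s ^ (-ν) * (M * (A / s) ^ (-(ν - δ))) := by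
        grw [hP s hs, hM _ (by positivity)]
    _ = C * M * A ^ (δ - ν) * s ^ (-δ) := by
        have hpow : s ^ (-ν) / s ^ (δ - ν) = s ^ (-δ) := by rw [← rpow_sub hs]; ring_nf
        rw [div_rpow hA.le hs.le, neg_sub, ← hpow]
        ring

lemma abs_setIntegral_Ioi_rpow_sub_rpow_mul_le {t : ℝ} (hδν : δ < ν)
    (hA : 0 < A) (ht : 0 < t) (hC : 0 ≤ C)
    (hP : ∀ s, 0 < s → |P s| ≤ C * s ^ (-ν) * exp (-(A / s))) :
    |∫ s in Ioi (2 * t), (s ^ δ - (s - t) ^ δ) * P s|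
      ≤ C * (|δ| * 2 ^ |δ - 1| * Gamma (ν - δ)) * t * A ^ (δ - ν) := by
  set F : ℝ → ℝ := fun s => s ^ (δ - ν - 1) * exp (-(A / s))
  have hF : IntegrableOn F (Ioi 0) := integrableOn_rpow_mul_exp_neg_div (by linarith) hA
  set K := C * |δ| * 2 ^ |δ - 1| * t
  have hbound : ∀ s ∈ Ioi (2 * t), ‖(s ^ δ - (s - t) ^ δ) * P s‖ ≤ K * F s := fun s hs => by
    have hs0 : 0 < s := by linarith [mem_Ioi.1 hs]
    rw [norm_mul, Real.norm_eq_abs]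
    calc |s ^ δ - (s - t) ^ δ| * |P s|
        ≤ (|δ| * 2 ^ |δ - 1| * t * s ^ (δ - 1)) * (C * s ^ (-ν) * exp (-(A / s))) :=
          mul_le_mul (abs_rpow_sub_rpow_sub_le ht (le_of_lt hs)) (hP s hs0) (abs_nonneg _)
            (by positivity)
      _ = K * F s := by
          simp only [K, F]
          rw [show δ - ν - 1 = (δ - 1) + -ν by ring, rpow_add hs0]
          ring
  calc |∫ s in Ioi (2 * t), (s ^ δ - (s - t) ^ δ) * P s|
      ≤ ∫ s in Ioi (2 * t), K * F s :=
        norm_integral_le_of_norm_le ((hF.mono_set (Ioi_subset_Ioi (by linarith))).const_mul K)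
          (ae_restrict_of_forall_mem measurableSet_Ioi hbound)
    _ ≤ ∫ s in Ioi 0, K * F s :=
        setIntegral_mono_set (hF.const_mul K)
          (ae_restrict_of_forall_mem measurableSet_Ioi fun s (hs : 0 < s) => by positivity)
          (Ioi_subset_Ioi (by linarith)).eventuallyLE
    _ = C * (|δ| * 2 ^ |δ - 1| * Gamma (ν - δ)) * t * A ^ (δ - ν) := by
        rw [integral_const_mul, integral_rpow_mul_exp_neg_div (by linarith) hA, neg_sub]
        ring

lemma integrableOn_rpow_mul_of_gaussian (hδν : δ + 1 < ν) (hA : 0 < A)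
    (hPm : AEStronglyMeasurable P (volume.restrict (Ioi 0)))
    (hP : ∀ s, 0 < s → |P s| ≤ C * s ^ (-ν) * exp (-(A / s))) :
    IntegrableOn (fun s => s ^ δ * P s) (Ioi 0) := by
  have hpow : ContinuousOn (fun s : ℝ => s ^ δ) (Ioi 0) :=
    continuousOn_id.rpow_const fun s (hs : 0 < s) => Or.inl hs.ne'
  refine Integrable.mono' ((integrableOn_rpow_mul_exp_neg_div (β := δ - ν + 1) (by linarith)
    hA).const_mul C) ((hpow.aestronglyMeasurable measurableSet_Ioi).mul hPm)
    (ae_restrict_of_forall_mem measurableSet_Ioi fun s (hs : 0 < s) => ?_)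
  rw [norm_mul, norm_of_nonneg (rpow_nonneg hs.le _), Real.norm_eq_abs,
    show δ - ν + 1 - 1 = δ + -ν by ring, rpow_add hs]
  calc s ^ δ * |P s| ≤ s ^ δ * (C * s ^ (-ν) * exp (-(A / s))) :=
        mul_le_mul_of_nonneg_left (hP s hs) (by positivity)
    _ = C * (s ^ δ * s ^ (-ν) * exp (-(A / s))) := by ring

end GaussianProfile

theorem exists_abs_integral_rpow_mul_sub_comp_add_le {ν δ : ℝ} (hδ : -1 < δ) (hδν : δ + 1 < ν) :
    ∃ K > 0, ∀ (C A t : ℝ) (P : ℝ → ℝ), 0 < A → 0 < t →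
      (∀ s, 0 < s → |P s| ≤ C * s ^ (-ν) * exp (-(A / s))) →
      |∫ s in Ioi 0, s ^ δ * (P s - P (s + t))| ≤ C * K * t * A ^ (δ - ν) := by
  obtain ⟨M, hM, hexp⟩ := exists_exp_neg_le_mul_rpow_neg (k := ν - δ) (by linarith)
  have hK : 0 < 2 * M + M * 2 ^ |δ| / (δ + 1) + |δ| * 2 ^ |δ - 1| * Gamma (ν - δ) := by
    have : 0 ≤ M * 2 ^ |δ| / (δ + 1) := div_nonneg (by positivity) (by linarith)
    have : 0 ≤ |δ| * 2 ^ |δ - 1| * Gamma (ν - δ) :=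
      mul_nonneg (by positivity) (Gamma_pos_of_pos (by linarith)).le
    linarith
  refine ⟨_, hK, fun C A t P hA ht hP => ?_⟩
  have hC := nonneg_of_gaussian hP
  by_cases hf : IntegrableOn (fun s => s ^ δ * (P s - P (s + t))) (Ioi 0)
  swap
  · rw [integral_undef hf, abs_zero]
    have := hK.le
    positivity
  have hPm : AEStronglyMeasurable P (volume.restrict (Ioi 0)) :=
    aestronglyMeasurable_of_sub_comp_add ht (tendsto_zero_of_gaussian (by linarith) hA.le hP)
      (aestronglyMeasurable_of_rpow_mul hf.aestronglyMeasurable)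
  have hB := abs_le_rpow_neg_of_gaussian hA hC hexp hP
  rw [setIntegral_mul_sub_comp_add_eq ht.le (integrableOn_rpow_mul_of_gaussian hδν hA hPm hP) hf]
  calc _ ≤ |∫ s in Ioc 0 (2 * t), s ^ δ * P s| + |∫ s in Ioc t (2 * t), (s - t) ^ δ * P s|
        + |∫ s in Ioi (2 * t), (s ^ δ - (s - t) ^ δ) * P s| :=
        (abs_add_le _ _).trans (add_le_add_left (abs_sub _ _) _)
    _ ≤ C * M * A ^ (δ - ν) * (2 * t) + C * M * A ^ (δ - ν) * 2 ^ |δ| / (δ + 1) * t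
        + C * (|δ| * 2 ^ |δ - 1| * Gamma (ν - δ)) * t * A ^ (δ - ν) := by
        gcongr
        · exact abs_setIntegral_Ioc_zero_rpow_mul_le (by positivity) hB
        · exact abs_setIntegral_Ioc_rpow_sub_mul_le hδ ht hB
        · exact abs_setIntegral_Ioi_rpow_sub_rpow_mul_le (by linarith) hA ht hC hP
    _ = _ := by ring

lemma sq_rpow_div_two_sub_one {r a : ℝ} (hr : 0 < r) : (r ^ 2) ^ (a / 2 - 1) = r ^ a / r ^ 2 := by
  rw [← rpow_natCast, ← rpow_mul hr.le, Nat.cast_ofNat, show (2 : ℝ) * (a / 2 - 1) = a - 2 by ring,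
    rpow_sub hr]

theorem diff_kernel_bound_general {n : ℕ}
    (pk : ℝ → (Fin n → ℝ) → (Fin n → ℝ) → ℝ) (hpk : GaussianBound pk)
    (α : ℝ) (hα : 0 < α) (hαn : α < n) :
    ∃ C' > 0, ∀ t : ℝ, 0 < t → ∀ x y : Fin n → ℝ, x ≠ y →
      |(Real.Gamma (α / 2))⁻¹ *
          ∫ s in Ioi (0 : ℝ), s ^ (α / 2 - 1) * (pk s x y - pk (s + t) x y)|
        ≤ C' * ‖x - y‖ ^ (α - (n : ℝ)) * (t / ‖x - y‖ ^ 2) := by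
  obtain ⟨C, hC, c, hc, hG⟩ := hpk
  obtain ⟨K, hK, hbound⟩ := exists_abs_integral_rpow_mul_sub_comp_add_le
    (ν := n / 2) (δ := α / 2 - 1) (by linarith) (by linarith)
  rw [show α / 2 - 1 - (n : ℝ) / 2 = (α - n) / 2 - 1 by ring] at hbound
  refine ⟨(Gamma (α / 2))⁻¹ * C * K * c ^ ((α - n) / 2 - 1), by positivity,
    fun t ht x y hxy => ?_⟩
  have hr : 0 < ‖x - y‖ := norm_pos_iff.2 (sub_ne_zero.2 hxy)
  have hP : ∀ s, 0 < s → |pk s x y| ≤ C * s ^ (-(n / 2 : ℝ)) * exp (-(c * ‖x - y‖ ^ 2 / s)) :=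
    fun s hs => by simpa only [neg_div, neg_mul] using hG s hs x y
  have hΓ : 0 < (Gamma (α / 2))⁻¹ := inv_pos.2 (Gamma_pos_of_pos (by linarith))
  rw [abs_mul, abs_of_pos hΓ]
  calc _ ≤ (Gamma (α / 2))⁻¹ * (C * K * t * (c * ‖x - y‖ ^ 2) ^ ((α - n) / 2 - 1)) := by
        gcongr
        exact hbound C _ t _ (by positivity) ht hP
    _ = _ := by
        rw [mul_rpow hc.le (by positivity), sq_rpow_div_two_sub_one hr]
        ring

/-- The kernel of `L^{-α/2} - e^{-tL}L^{-α/2}` satisfies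
`|K_{α,t}(x,y)| ≤ C' |x-y|^{α-n} · t/|x-y|²`. -/
theorem diff_kernel_bound {n : ℕ} (hn : 0 < n)
    (pk : ℝ → (Fin n → ℝ) → (Fin n → ℝ) → ℝ) (hpk : GaussianBound pk)
    (α : ℝ) (hα : 0 < α) (hαn : α < n) :
    ∃ C' > 0, ∀ t : ℝ, 0 < t → ∀ x y : Fin n → ℝ, x ≠ y →
      |(Real.Gamma (α / 2))⁻¹ *
          ∫ s in Ioi (0 : ℝ), s ^ (α / 2 - 1) * (pk s x y - pk (s + t) x y)|
        ≤ C' * ‖x - y‖ ^ (α - (n : ℝ)) * (t / ‖x - y‖ ^ 2) :=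
  diff_kernel_bound_general pk hpk α hα hαn
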